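/- Let P_1, …, P_m be a Clifford system of signature (m, r) on ℝ^{2l}_s with m ≡ 0 (mod 4) and r ≡ 0 (mod 2), and set P := P_1P_2⋯P_m. Let z ∈ M_{+,3}, with unique decomposition z = z_+ + z_− (z_+ ∈ E_+(P), z_− ∈ E_−(P)); then ⟨z_+,z_+⟩, ⟨z_−,z_−⟩ ∈ (0,1). Set x := z_+/√⟨z_+,z_+⟩ and y := z_−/√⟨z_−,z_−⟩. Then the curve α(t) := (cos t)x + (sin t)y, t ∈ [0, π/2], satisfies α(t) ∈ M_+ for all t ∈ [0, π/2], α(0) = x, α(π/2) = y, and α(t_z) = z for the unique t_z ∈ (0, π/2) with cos t_z = √⟨z_+,z_+⟩ and sin t_z = √⟨z_−,z_−⟩; in particular there is a path in M_+ from x to y through z. Moreover, ⟨P_j x, y⟩ = 0 for all j ∈ {1, …, m}. -/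

import Mathlib

open Matrix

noncomputable section

/-- Entries of the signature matrix `J_{r,m-r}`, with 1-based indices:
`η_{ii} = -1` for `1 ≤ i ≤ r` and `η_{ii} = 1` for `r < i`; off-diagonal entries vanish. -/
def cliffEta (r i j : ℕ) : ℝ :=
  if i = j then (if i ≤ r then -1 else 1) else 0

/-- The matrix `J_{s,n-s} = diag(-E_s, E_{n-s})`. -/
def psJ (n s : ℕ) : Matrix (Fin n) (Fin n) ℝ :=
  Matrix.diagonal fun i => if (i : ℕ) < s then (-1 : ℝ) else 1

/-- The pseudo-inner product `⟨u, v⟩ = uᵀ J_{s,n-s} v` of `ℝ^n_s`. -/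
def psInner (n s : ℕ) (u v : Fin n → ℝ) : ℝ :=
  u ⬝ᵥ ((psJ n s) *ᵥ v)

/-- A Clifford system of signature `(m, r)` on `ℝ^{2l}_s`, indexed by `1, …, m`:
each `P i` is symmetric with respect to the pseudo-inner product, and
`P i * P j + P j * P i = 2 η_{ij} E_{2l}`. -/
def IsCliffordSystem (l s m r : ℕ)
    (P : ℕ → Matrix (Fin (2 * l)) (Fin (2 * l)) ℝ) : Prop :=
  (∀ i ∈ Finset.Icc 1 m, (P i)ᵀ = psJ (2 * l) s * P i * psJ (2 * l) s) ∧
  (∀ i ∈ Finset.Icc 1 m, ∀ j ∈ Finset.Icc 1 m,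
    P i * P j + P j * P i
      = (2 * cliffEta r i j) • (1 : Matrix (Fin (2 * l)) (Fin (2 * l)) ℝ))

/-!
Reversing `P = P₁ ⋯ Pₘ` costs the sign `(-1)^(m choose 2)`, which is `1` for `m ≡ 0 (mod 4)`,
so `P` is symmetric for `⟨·,·⟩`; since `m` is even, every `Pⱼ` anticommutes with `P`. Hence
`E₊(P) ⟂ E₋(P)` and each `Pⱼ` swaps the two eigenspaces, so `⟨Pⱼ z₊, z₊⟩ = ⟨Pⱼ z₋, z₋⟩ = 0`,
and `⟨Pⱼ z, z⟩ = 0` reduces to `⟨Pⱼ z₊, z₋⟩ = 0`. On the plane spanned by `x` and `y` the form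
`⟨·,·⟩` is then the identity and every `⟨Pⱼ ·, ·⟩` vanishes, so the whole quarter circle
`cos t • x + sin t • y` lies in `M₊`.
-/

section Anticommute
variable {R : Type*} [Ring R]

theorem mul_list_prod_of_forall_anticommute (b : R) :
    ∀ L : List R, (∀ a ∈ L, b * a = -(a * b)) → b * L.prod = (-1) ^ L.length * (L.prod * b)
  | [], _ => by simp
  | a :: L, h => by
    have ih := mul_list_prod_of_forall_anticommute b L fun c hc => h c (List.mem_cons_of_mem _ hc)
    rw [List.prod_cons, ← mul_assoc, h a List.mem_cons_self, neg_mul, mul_assoc, ih, ← mul_assoc a,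
      ← ((Commute.neg_one_left a).pow_left _).eq, List.length_cons, pow_succ]
    noncomm_ring

theorem mul_list_prod_map_of_anticommute {ι : Type*} (f : ι → R) {l : List ι} (hl : l.Nodup)
    {j : ι} (hj : j ∈ l) (h : ∀ i ∈ l, i ≠ j → f j * f i = -(f i * f j)) :
    f j * (l.map f).prod = (-1) ^ (l.length + 1) * ((l.map f).prod * f j) := by
  obtain ⟨s, t, rfl⟩ := List.append_of_mem hj
  have hjst : j ∉ s ++ t := (List.nodup_cons.mp (List.nodup_middle.mp hl)).1
  have hanti : ∀ l' : List ι, (∀ i ∈ l', i ∈ s ++ j :: t ∧ i ≠ j) →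
      f j * (l'.map f).prod = (-1) ^ l'.length * ((l'.map f).prod * f j) := fun l' hl' => by
    rw [mul_list_prod_of_forall_anticommute _ _ ?_, List.length_map]
    simp only [List.mem_map, forall_exists_index, and_imp, forall_apply_eq_imp_iff₂]
    exact fun i hi => h i (hl' i hi).1 (hl' i hi).2
  have hs := hanti s fun i hi => ⟨by simp [hi], fun hij => hjst (hij ▸ List.mem_append_left t hi)⟩
  have ht := hanti t fun i hi => ⟨by simp [hi], fun hij => hjst (hij ▸ List.mem_append_right s hi)⟩
  have hc : Commute ((-1 : R) ^ t.length) ((s.map f).prod * f j) :=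
    (Commute.neg_one_left _).pow_left _
  simp only [List.map_append, List.map_cons, List.prod_append, List.prod_cons, List.length_append,
    List.length_cons]
  calc f j * ((s.map f).prod * (f j * (t.map f).prod))
      = (-1) ^ s.length * ((s.map f).prod * f j * (-1) ^ t.length * ((t.map f).prod * f j)) := by
        rw [← mul_assoc, hs, ht, mul_assoc ((-1) ^ _), mul_assoc (_ * f j)]
    _ = _ := by
        rw [← hc.eq, pow_add, pow_add, pow_succ, pow_succ]
        noncomm_ring

theorem list_prod_reverse_of_pairwise_anticommute :
    ∀ L : List R, L.Pairwise (fun a b => a * b = -(b * a)) →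
      L.reverse.prod = (-1) ^ L.length.choose 2 * L.prod
  | [], _ => by simp
  | a :: L, h => by
    rw [List.pairwise_cons] at h
    have hswap : L.prod * a = (-1) ^ L.length * (a * L.prod) := by
      rw [mul_list_prod_of_forall_anticommute a L h.1, ← mul_assoc, ← pow_add,
        Even.neg_one_pow ⟨_, rfl⟩, one_mul]
    rw [List.reverse_cons, List.prod_append, list_prod_reverse_of_pairwise_anticommute L h.2,
      List.prod_singleton, mul_assoc, hswap, ← mul_assoc, ← pow_add, List.length_cons,
      Nat.choose_succ_succ', Nat.choose_one_right, add_comm, List.prod_cons]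

end Anticommute

def IsPsSymmetric (n s : ℕ) (A : Matrix (Fin n) (Fin n) ℝ) : Prop :=
  Aᵀ = psJ n s * A * psJ n s

section PseudoInnerProduct
variable {n s : ℕ}

theorem psJ_mul_self (n s : ℕ) : psJ n s * psJ n s = 1 := by
  rw [psJ, diagonal_mul_diagonal, ← diagonal_one]
  congr with i
  split_ifs <;> norm_num

theorem psJ_transpose (n s : ℕ) : (psJ n s)ᵀ = psJ n s := diagonal_transpose _

theorem psInner_comm (u v : Fin n → ℝ) : psInner n s u v = psInner n s v u := by
  rw [psInner, psInner, dotProduct_mulVec, ← mulVec_transpose, psJ_transpose, dotProduct_comm]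

@[simp] theorem psInner_add_left (u v w : Fin n → ℝ) :
    psInner n s (u + v) w = psInner n s u w + psInner n s v w := add_dotProduct _ _ _

@[simp] theorem psInner_add_right (u v w : Fin n → ℝ) :
    psInner n s u (v + w) = psInner n s u v + psInner n s u w := by
  simp [psInner, mulVec_add]

@[simp] theorem psInner_smul_left (c : ℝ) (u v : Fin n → ℝ) :
    psInner n s (c • u) v = c * psInner n s u v := smul_dotProduct _ _ _

@[simp] theorem psInner_smul_right (c : ℝ) (u v : Fin n → ℝ) :
    psInner n s u (c • v) = c * psInner n s u v := by
  simp [psInner, mulVec_smul]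

theorem isPsSymmetric_iff {A : Matrix (Fin n) (Fin n) ℝ} :
    IsPsSymmetric n s A ↔ Aᵀ * psJ n s = psJ n s * A := by
  constructor <;> intro h
  · rw [h, Matrix.mul_assoc, psJ_mul_self, Matrix.mul_one]
  · rw [IsPsSymmetric, ← h, Matrix.mul_assoc, psJ_mul_self, Matrix.mul_one]

theorem isPsSymmetric_one : IsPsSymmetric n s 1 := by
  rw [isPsSymmetric_iff, transpose_one, Matrix.one_mul, Matrix.mul_one]

theorem IsPsSymmetric.psInner_mulVec {A : Matrix (Fin n) (Fin n) ℝ} (hA : IsPsSymmetric n s A)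
    (u v : Fin n → ℝ) : psInner n s (A *ᵥ u) v = psInner n s u (A *ᵥ v) := by
  rw [psInner, psInner, ← vecMul_transpose, ← dotProduct_mulVec, mulVec_mulVec,
    isPsSymmetric_iff.mp hA, ← mulVec_mulVec]

theorem IsPsSymmetric.psInner_mulVec_smul_add_smul {A : Matrix (Fin n) (Fin n) ℝ}
    (hA : IsPsSymmetric n s A) (a b : ℝ) (u v : Fin n → ℝ) :
    psInner n s (A *ᵥ (a • u + b • v)) (a • u + b • v) =
      a ^ 2 * psInner n s (A *ᵥ u) u + 2 * a * b * psInner n s (A *ᵥ u) v +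
        b ^ 2 * psInner n s (A *ᵥ v) v := by
  have hvu : psInner n s (A *ᵥ v) u = psInner n s (A *ᵥ u) v := by
    rw [hA.psInner_mulVec, psInner_comm]
  simp only [mulVec_add, mulVec_smul, psInner_add_left, psInner_add_right, psInner_smul_left,
    psInner_smul_right, hvu]
  ring

theorem transpose_list_prod_mul_psJ :
    ∀ L : List (Matrix (Fin n) (Fin n) ℝ), (∀ A ∈ L, IsPsSymmetric n s A) →
      L.prodᵀ * psJ n s = psJ n s * L.reverse.prod
  | [], _ => by simp
  | A :: L, h => by
    rw [List.prod_cons, transpose_mul, Matrix.mul_assoc,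
      isPsSymmetric_iff.mp (h A List.mem_cons_self),
      ← Matrix.mul_assoc, transpose_list_prod_mul_psJ L fun B hB => h B (List.mem_cons_of_mem _ hB),
      List.reverse_cons, List.prod_append, List.prod_singleton, Matrix.mul_assoc]

theorem psInner_smul_add_smul_self_eq_one {u v : Fin n → ℝ} {a b : ℝ} (ha : a ^ 2 = psInner n s u u)
    (hb : b ^ 2 = psInner n s v v) (ha0 : a ≠ 0) (hb0 : b ≠ 0) (huv : psInner n s u v = 0)
    (t : ℝ) :
    psInner n s ((Real.cos t * a⁻¹) • u + (Real.sin t * b⁻¹) • v)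
      ((Real.cos t * a⁻¹) • u + (Real.sin t * b⁻¹) • v) = 1 := by
  have h := (isPsSymmetric_one (s := s)).psInner_mulVec_smul_add_smul (Real.cos t * a⁻¹)
    (Real.sin t * b⁻¹) u v
  simp only [one_mulVec] at h
  rw [h, huv, mul_zero, add_zero, mul_pow, mul_pow, inv_pow, inv_pow, mul_assoc, mul_assoc, ← ha,
    ← hb, inv_mul_cancel₀ (pow_ne_zero 2 ha0), inv_mul_cancel₀ (pow_ne_zero 2 hb0), mul_one,
    mul_one, Real.cos_sq_add_sin_sq]

end PseudoInnerProduct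

section Eigenspaces
variable {n s : ℕ} {Q A : Matrix (Fin n) (Fin n) ℝ}

theorem IsPsSymmetric.psInner_eq_zero_of_mulVec_eq_neg (hQ : IsPsSymmetric n s Q)
    {u v : Fin n → ℝ} (hu : Q *ᵥ u = u) (hv : Q *ᵥ v = -v) : psInner n s u v = 0 := by
  have h := hQ.psInner_mulVec u v
  rw [hu, hv, ← neg_one_smul ℝ v, psInner_smul_right] at h
  linarith

theorem mulVec_mulVec_eq_neg_of_anticommute (hAQ : A * Q = -(Q * A)) {u : Fin n → ℝ}
    (hu : Q *ᵥ u = u) : Q *ᵥ (A *ᵥ u) = -(A *ᵥ u) := by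
  rw [mulVec_mulVec, neg_eq_iff_eq_neg.mp hAQ.symm, neg_mulVec, ← mulVec_mulVec, hu]

theorem mulVec_mulVec_eq_of_anticommute (hAQ : A * Q = -(Q * A)) {v : Fin n → ℝ}
    (hv : Q *ᵥ v = -v) : Q *ᵥ (A *ᵥ v) = A *ᵥ v := by
  rw [mulVec_mulVec, neg_eq_iff_eq_neg.mp hAQ.symm, neg_mulVec, ← mulVec_mulVec, hv,
    mulVec_neg, neg_neg]

theorem psInner_mulVec_eigen_eq_zero (hQ : IsPsSymmetric n s Q) (hA : IsPsSymmetric n s A)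
    (hAQ : A * Q = -(Q * A)) {u v : Fin n → ℝ} (hu : Q *ᵥ u = u) (hv : Q *ᵥ v = -v)
    (huv : psInner n s (A *ᵥ (u + v)) (u + v) = 0) :
    psInner n s (A *ᵥ u) u = 0 ∧ psInner n s (A *ᵥ v) v = 0 ∧ psInner n s (A *ᵥ u) v = 0 := by
  have hAu : psInner n s (A *ᵥ u) u = 0 := by
    rw [psInner_comm]
    exact hQ.psInner_eq_zero_of_mulVec_eq_neg hu (mulVec_mulVec_eq_neg_of_anticommute hAQ hu)
  have hAv : psInner n s (A *ᵥ v) v = 0 :=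
    hQ.psInner_eq_zero_of_mulVec_eq_neg (mulVec_mulVec_eq_of_anticommute hAQ hv) hv
  have h := hA.psInner_mulVec_smul_add_smul 1 1 u v
  rw [one_smul, one_smul, huv, hAu, hAv] at h
  exact ⟨hAu, hAv, by linarith⟩

end Eigenspaces

theorem Real.exists_cos_eq_sin_eq_sqrt {a : ℝ} (ha0 : 0 < a) (ha1 : a < 1) :
    ∃ t ∈ Set.Ioo 0 (Real.pi / 2), Real.cos t = a ∧ Real.sin t = √(1 - a ^ 2) :=
  ⟨Real.arccos a, ⟨Real.arccos_pos.mpr ha1, Real.arccos_lt_pi_div_two.mpr ha0⟩,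
    Real.cos_arccos (by linarith) ha1.le, Real.sin_arccos a⟩

section CliffordSystem
variable {l s m r : ℕ} {P : ℕ → Matrix (Fin (2 * l)) (Fin (2 * l)) ℝ}

theorem IsCliffordSystem.isPsSymmetric (hP : IsCliffordSystem l s m r P) {i : ℕ}
    (hi : i ∈ Finset.Icc 1 m) : IsPsSymmetric (2 * l) s (P i) :=
  hP.1 i hi

theorem IsCliffordSystem.anticommute (hP : IsCliffordSystem l s m r P) {i j : ℕ}
    (hi : i ∈ Finset.Icc 1 m) (hj : j ∈ Finset.Icc 1 m) (hij : i ≠ j) :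
    P i * P j = -(P j * P i) := by
  have h := hP.2 i hi j hj
  rw [cliffEta, if_neg hij, mul_zero, zero_smul] at h
  exact eq_neg_of_add_eq_zero_left h

theorem mem_range'_one_iff_mem_Icc {m j : ℕ} : j ∈ List.range' 1 m ↔ j ∈ Finset.Icc 1 m := by
  rw [List.mem_range'_1, Finset.mem_Icc]
  omega

theorem IsCliffordSystem.isPsSymmetric_prod (hP : IsCliffordSystem l s m r P) (hm4 : m % 4 = 0) :
    IsPsSymmetric (2 * l) s ((List.range' 1 m).map P).prod := by
  have hrev : ((List.range' 1 m).map P).reverse.prod = ((List.range' 1 m).map P).prod := by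
    have hpair : ((List.range' 1 m).map P).Pairwise (fun a b => a * b = -(b * a)) :=
      List.pairwise_map.mpr <| (List.nodup_range' 1).imp_of_mem fun hi hj hij =>
        hP.anticommute (mem_range'_one_iff_mem_Icc.mp hi) (mem_range'_one_iff_mem_Icc.mp hj) hij
    have heven : Even (m.choose 2) := by
      obtain ⟨q, rfl⟩ : 4 ∣ m := Nat.dvd_of_mod_eq_zero hm4
      refine ⟨q * (4 * q - 1), ?_⟩
      rw [Nat.choose_two_right, show 4 * q * (4 * q - 1) = 2 * (q * (4 * q - 1) + q * (4 * q - 1))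
        by ring, Nat.mul_div_cancel_left _ two_pos]
    rw [list_prod_reverse_of_pairwise_anticommute _ hpair, List.length_map, List.length_range',
      heven.neg_one_pow, Matrix.one_mul]
  rw [isPsSymmetric_iff, transpose_list_prod_mul_psJ, hrev]
  simp only [List.mem_map, mem_range'_one_iff_mem_Icc]
  rintro _ ⟨i, hi, rfl⟩
  exact hP.isPsSymmetric hi

theorem IsCliffordSystem.anticommute_prod (hP : IsCliffordSystem l s m r P) (hm : Even m) {j : ℕ}
    (hj : j ∈ Finset.Icc 1 m) :
    P j * ((List.range' 1 m).map P).prod = -(((List.range' 1 m).map P).prod * P j) := by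
  rw [mul_list_prod_map_of_anticommute P (List.nodup_range' 1) (mem_range'_one_iff_mem_Icc.mpr hj)
      fun i hi hij => hP.anticommute hj (mem_range'_one_iff_mem_Icc.mp hi) hij.symm,
    List.length_range', (hm.add_one).neg_one_pow, neg_one_mul]

end CliffordSystem

theorem path_through_Mplus3_general (l s m r : ℕ)
    (hm4 : m % 4 = 0)
    (P : ℕ → Matrix (Fin (2 * l)) (Fin (2 * l)) ℝ)
    (hP : IsCliffordSystem l s m r P)
    (Pm : Matrix (Fin (2 * l)) (Fin (2 * l)) ℝ)
    (hPm : Pm = ((List.range m).map fun k => P (1 + k)).prod)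
    (Mp : Set (Fin (2 * l) → ℝ))
    (hMp : Mp = {x | psInner (2 * l) s x x = 1 ∧
      ∀ j ∈ Finset.Icc 1 m, psInner (2 * l) s (P j *ᵥ x) x = 0})
    (z zp zm : Fin (2 * l) → ℝ)
    (hzp : Pm *ᵥ zp = zp) (hzm : Pm *ᵥ zm = -zm) (hz : z = zp + zm)
    (hzM : z ∈ Mp)
    (hz3 : 0 < psInner (2 * l) s zp zp ∧ psInner (2 * l) s zp zp < 1)
    (x y : Fin (2 * l) → ℝ)
    (hx : x = (Real.sqrt (psInner (2 * l) s zp zp))⁻¹ • zp)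
    (hy : y = (Real.sqrt (psInner (2 * l) s zm zm))⁻¹ • zm)
    (α : ℝ → (Fin (2 * l) → ℝ))
    (hα : α = fun t => Real.cos t • x + Real.sin t • y) :
    (0 < psInner (2 * l) s zm zm ∧ psInner (2 * l) s zm zm < 1) ∧
    (∀ t ∈ Set.Icc (0 : ℝ) (Real.pi / 2), α t ∈ Mp) ∧
    α 0 = x ∧ α (Real.pi / 2) = y ∧
    (∃ tz ∈ Set.Ioo (0 : ℝ) (Real.pi / 2),
      Real.cos tz = Real.sqrt (psInner (2 * l) s zp zp) ∧
      Real.sin tz = Real.sqrt (psInner (2 * l) s zm zm) ∧ α tz = z) ∧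
    (∀ j ∈ Finset.Icc 1 m, psInner (2 * l) s (P j *ᵥ x) y = 0) := by
  have hPm' : Pm = ((List.range' 1 m).map P).prod := by
    rw [hPm, List.range'_eq_map_range, List.map_map]
    rfl
  have hQ : IsPsSymmetric (2 * l) s Pm := hPm' ▸ hP.isPsSymmetric_prod hm4
  have hPQ : ∀ j ∈ Finset.Icc 1 m, P j * Pm = -(Pm * P j) :=
    fun j hj => hPm' ▸ hP.anticommute_prod (Nat.even_iff.mpr (by omega)) hj
  rw [hMp, hz] at hzM
  have horth : psInner (2 * l) s zp zm = 0 := hQ.psInner_eq_zero_of_mulVec_eq_neg hzp hzm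
  have hzm_norm : psInner (2 * l) s zm zm = 1 - psInner (2 * l) s zp zp := by
    have h := hzM.1
    rw [psInner_add_left, psInner_add_right, psInner_add_right, psInner_comm zm zp, horth] at h
    linarith
  have hcross : ∀ j ∈ Finset.Icc 1 m, psInner (2 * l) s (P j *ᵥ zp) zp = 0 ∧
      psInner (2 * l) s (P j *ᵥ zm) zm = 0 ∧ psInner (2 * l) s (P j *ᵥ zp) zm = 0 :=
    fun j hj =>
      psInner_mulVec_eigen_eq_zero hQ (hP.isPsSymmetric hj) (hPQ j hj) hzp hzm (hzM.2 j hj)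
  set a := √(psInner (2 * l) s zp zp)
  set b := √(psInner (2 * l) s zm zm)
  have ha : a ^ 2 = psInner (2 * l) s zp zp := Real.sq_sqrt hz3.1.le
  have hb : b ^ 2 = psInner (2 * l) s zm zm := Real.sq_sqrt (by linarith)
  have ha0 : 0 < a := Real.sqrt_pos.mpr hz3.1
  have hb0 : 0 < b := Real.sqrt_pos.mpr (by linarith)
  have hcurve : ∀ t, α t = (Real.cos t * a⁻¹) • zp + (Real.sin t * b⁻¹) • zm := fun t => by
    simp only [hα, hx, hy, smul_smul]
  obtain ⟨tz, htz, hcos, hsin⟩ :=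
    Real.exists_cos_eq_sin_eq_sqrt ha0 ((Real.sqrt_lt' one_pos).mpr (by linarith))
  rw [ha, ← hzm_norm] at hsin
  refine ⟨⟨by linarith, by linarith⟩, fun t _ => ?_, by simp [hα], by simp [hα],
    ⟨tz, htz, hcos, hsin, ?_⟩, fun j hj => ?_⟩
  · rw [hMp, hcurve]
    refine ⟨psInner_smul_add_smul_self_eq_one ha hb ha0.ne' hb0.ne' horth t, fun j hj => ?_⟩
    rw [(hP.isPsSymmetric hj).psInner_mulVec_smul_add_smul, (hcross j hj).1, (hcross j hj).2.1,
      (hcross j hj).2.2]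
    ring
  · rw [hcurve, hcos, hsin, hz, mul_inv_cancel₀ ha0.ne', mul_inv_cancel₀ hb0.ne', one_smul,
      one_smul]
  · rw [hx, hy, mulVec_smul, psInner_smul_left, psInner_smul_right, (hcross j hj).2.2]
    ring

/-- with `m ≡ 0 (mod 4)`, `r ≡ 0 (mod 2)`, `P = P_1 ⋯ P_m`, if
`z = z₊ + z₋ ∈ M₊,₃` (i.e. `z ∈ M₊` with `0 < ⟨z₊,z₊⟩ < 1`), then also
`⟨z₋,z₋⟩ ∈ (0,1)`; setting `x = z₊/√⟨z₊,z₊⟩`, `y = z₋/√⟨z₋,z₋⟩`, the curve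
`α(t) = (cos t)x + (sin t)y` lies in `M₊` for `t ∈ [0, π/2]`, with `α(0) = x`,
`α(π/2) = y`, and `α(t_z) = z` for the `t_z ∈ (0, π/2)` with `cos t_z = √⟨z₊,z₊⟩`,
`sin t_z = √⟨z₋,z₋⟩`; moreover `⟨P_j x, y⟩ = 0` for all `j ∈ {1, …, m}`. -/
theorem path_through_Mplus3 (l s m r : ℕ) (hl : 0 < l) (hs : s ≤ 2 * l)
    (hm : 2 ≤ m) (hm4 : m % 4 = 0) (hr : r ≤ m) (hr2 : r % 2 = 0)
    (P : ℕ → Matrix (Fin (2 * l)) (Fin (2 * l)) ℝ)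
    (hP : IsCliffordSystem l s m r P)
    (Pm : Matrix (Fin (2 * l)) (Fin (2 * l)) ℝ)
    (hPm : Pm = ((List.range m).map fun k => P (1 + k)).prod)
    (Mp : Set (Fin (2 * l) → ℝ))
    (hMp : Mp = {x | psInner (2 * l) s x x = 1 ∧
      ∀ j ∈ Finset.Icc 1 m, psInner (2 * l) s (P j *ᵥ x) x = 0})
    (z zp zm : Fin (2 * l) → ℝ)
    (hzp : Pm *ᵥ zp = zp) (hzm : Pm *ᵥ zm = -zm) (hz : z = zp + zm)
    (hzM : z ∈ Mp)
    (hz3 : 0 < psInner (2 * l) s zp zp ∧ psInner (2 * l) s zp zp < 1)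
    (x y : Fin (2 * l) → ℝ)
    (hx : x = (Real.sqrt (psInner (2 * l) s zp zp))⁻¹ • zp)
    (hy : y = (Real.sqrt (psInner (2 * l) s zm zm))⁻¹ • zm)
    (α : ℝ → (Fin (2 * l) → ℝ))
    (hα : α = fun t => Real.cos t • x + Real.sin t • y) :
    (0 < psInner (2 * l) s zm zm ∧ psInner (2 * l) s zm zm < 1) ∧
    (∀ t ∈ Set.Icc (0 : ℝ) (Real.pi / 2), α t ∈ Mp) ∧
    α 0 = x ∧ α (Real.pi / 2) = y ∧
    (∃ tz ∈ Set.Ioo (0 : ℝ) (Real.pi / 2),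
      Real.cos tz = Real.sqrt (psInner (2 * l) s zp zp) ∧
      Real.sin tz = Real.sqrt (psInner (2 * l) s zm zm) ∧ α tz = z) ∧
    (∀ j ∈ Finset.Icc 1 m, psInner (2 * l) s (P j *ᵥ x) y = 0) :=
  path_through_Mplus3_general l s m r hm4 P hP Pm hPm Mp hMp z zp zm hzp hzm hz hzM hz3 x y hx hy α
    hα
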